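/- arXiv:1703.03203 — 5 statements merged into one kernel-verified Lean document; each statement's English description precedes it below -/
import Mathlib

section
/- Let N ∈ ℕ and let F₁ : [0, 1] → ℝ be a function that can be represented as F₁(x) = c₁(1-x)^{1/2} + c₂(1-x)^{3/2} + F̃₁(x), where c₁, c₂ ∈ ℝ and F̃₁ is twice continuously differentiable on [0, 1]. Then there exists a constant L₁ > 0 (depending on F₁ and N) such that for all n ≥ N, |Rₙ| ≤ L₁ / n^{3/2}. -/
/-!
The Riemann sum of the statement is the composite trapezoidal rule `trapezoidal_integral F₁ n 0 1`,
so `Rₙ = -trapezoidal_error F₁ n 0 1`, and the error is linear in `F₁`. For the `C²` part the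
classical bound gives `O(n⁻²)`. For `(1 - x) ^ p` with `1/2 ≤ p ≤ 3/2` one reflects to `x ^ p` and
bounds cell by cell: on `[0, 1/n]` monotonicity bounds the error by `(1/n) ^ (1 + p) ≤ n ^ (-3/2)`,
while on `[k/n, (k+1)/n]`, `k ≥ 1`, the second derivative is at most `(3/4) (k/n) ^ (-3/2)`, so the
cell error is at most `n ^ (-3/2) k ^ (-3/2) / 16`, and `∑ k ^ (-3/2)` converges.
-/

open MeasureTheory Set Finset intervalIntegral

theorem trapezoidal_error_add {f g : ℝ → ℝ} {a b : ℝ} (N : ℕ)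
    (hf : IntervalIntegrable f volume a b) (hg : IntervalIntegrable g volume a b) :
    trapezoidal_error (fun x ↦ f x + g x) N a b =
      trapezoidal_error f N a b + trapezoidal_error g N a b := by
  simp only [trapezoidal_error, trapezoidal_integral, integral_add hf hg, sum_add_distrib]
  ring

theorem trapezoidal_error_const_mul (f : ℝ → ℝ) (c : ℝ) (N : ℕ) (a b : ℝ) :
    trapezoidal_error (fun x ↦ c * f x) N a b = c * trapezoidal_error f N a b := by
  simp only [trapezoidal_error, trapezoidal_integral, intervalIntegral.integral_const_mul,
    ← mul_sum]
  ring

theorem trapezoidal_error_congr {f g : ℝ → ℝ} {a b : ℝ} (N : ℕ) (hab : a ≤ b)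
    (hfg : EqOn f g (Icc a b)) :
    trapezoidal_error f N a b = trapezoidal_error g N a b := by
  have hnode : ∀ k ∈ range (N - 1), a + (k + 1) * (b - a) / N ∈ Icc a b := by
    intro k hk
    have hkN : (k : ℝ) + 1 ≤ N := by
      have := mem_range.mp hk
      exact_mod_cast (by omega : k + 1 ≤ N)
    have hN : (0 : ℝ) < N := by linarith [(k.cast_nonneg : (0 : ℝ) ≤ k)]
    have hba := sub_nonneg.2 hab
    constructor
    · have : 0 ≤ (k + 1) * (b - a) / N := by positivity
      linarith
    · rw [mul_div_right_comm]
      nlinarith [div_le_one_of_le₀ hkN hN.le]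
  simp only [trapezoidal_error, trapezoidal_integral,
    integral_congr (hfg.mono (uIcc_of_le hab).subset), hfg (left_mem_Icc.2 hab),
    hfg (right_mem_Icc.2 hab), sum_congr rfl fun k hk ↦ hfg (hnode k hk)]

theorem trapezoidal_error_comp_sub_left (f : ℝ → ℝ) (c : ℝ) {N : ℕ} (hN : 0 < N) (a b : ℝ) :
    trapezoidal_error (fun x ↦ f (c - x)) N a b = trapezoidal_error f N (c - b) (c - a) := by
  have hnode (k : ℝ) :
      c - (a + (k + 1) * (b - a) / N) = c - a + (k + 1) * (c - b - (c - a)) / N := by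
    ring
  rw [trapezoidal_error_symm f hN]
  simp only [trapezoidal_error, trapezoidal_integral, integral_comp_sub_left (fun x ↦ f x) c,
    integral_symm (c - b), hnode]
  ring

theorem trapezoidal_error_zero_one_eq_sum {f : ℝ → ℝ} {n : ℕ} (hn : 0 < n)
    (hf : IntervalIntegrable f volume 0 1) :
    trapezoidal_error f n 0 1 = ∑ i ∈ range n, trapezoidal_error f 1 (i / n) ((i + 1) / n) := by
  have hend : (0 : ℝ) + n * (1 / n) = 1 := by field_simp; simp
  have key := sum_trapezoidal_error_adjacent_intervals (f := f) (a := 0) (h := 1 / n) hn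
    (by rwa [hend])
  rw [hend] at key
  rw [← key]
  congr 1 with i
  congr 1 <;> field_simp <;> ring

theorem abs_trapezoidal_error_le_of_hasDerivWithinAt {f f' f'' : ℝ → ℝ} {a b M : ℝ} (hab : a ≤ b)
    (hf : ∀ x ∈ Icc a b, HasDerivWithinAt f (f' x) (Icc a b) x)
    (hf' : ∀ x ∈ Icc a b, HasDerivWithinAt f' (f'' x) (Icc a b) x)
    (hM : ∀ x ∈ Icc a b, |f'' x| ≤ M) {N : ℕ} (hN : 0 < N) :
    |trapezoidal_error f N a b| ≤ (b - a) ^ 3 * M / (12 * N ^ 2) := by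
  rcases hab.eq_or_lt with rfl | hlt
  · simp
  have hs : UniqueDiffOn ℝ (Icc a b) := uniqueDiffOn_Icc hlt
  have hderiv : EqOn (derivWithin f (Icc a b)) f' (Icc a b) :=
    fun x hx ↦ (hf x hx).derivWithin (hs x hx)
  have hderiv2 (x : ℝ) (hx : x ∈ Icc a b) :
      HasDerivWithinAt (derivWithin f (Icc a b)) (f'' x) (Icc a b) x :=
    (hf' x hx).congr_of_mem hderiv hx
  have hbound (x : ℝ) : |iteratedDerivWithin 2 f (Icc a b) x| ≤ M := by
    rw [iteratedDerivWithin_succ, iteratedDerivWithin_one]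
    by_cases hx : x ∈ Icc a b
    · rw [(hderiv2 x hx).derivWithin (hs x hx)]
      exact hM x hx
    · rw [derivWithin_zero_of_notMem_closure (by rwa [closure_Icc]), abs_zero]
      exact (abs_nonneg _).trans (hM a (left_mem_Icc.2 hab))
  have key := @trapezoidal_error_le f a b
  rw [uIcc_of_le hab, abs_of_nonneg (sub_nonneg.2 hab)] at key
  exact key (fun x hx ↦ (hf x hx).differentiableWithinAt)
    (fun x hx ↦ (hderiv2 x hx).differentiableWithinAt) hbound hN

theorem abs_trapezoidal_error_one_le_of_monotoneOn {f : ℝ → ℝ} {a b : ℝ} (hab : a ≤ b)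
    (hf : MonotoneOn f (Icc a b)) :
    |trapezoidal_error f 1 a b| ≤ (b - a) * (f b - f a) := by
  have ha : a ∈ Icc a b := left_mem_Icc.2 hab
  have hb : b ∈ Icc a b := right_mem_Icc.2 hab
  have hint : IntervalIntegrable f volume a b :=
    MonotoneOn.intervalIntegrable (by rwa [uIcc_of_le hab])
  have hlower : (b - a) * f a ≤ ∫ x in a..b, f x := by
    simpa using integral_mono_on hab intervalIntegrable_const hint fun x hx ↦ hf ha hx hx.1
  have hupper : (∫ x in a..b, f x) ≤ (b - a) * f b := by
    simpa using integral_mono_on hab hint intervalIntegrable_const fun x hx ↦ hf hx hb hx.2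
  have hfab : f a ≤ f b := hf ha hb hab
  rw [trapezoidal_error, trapezoidal_integral_one, abs_le]
  constructor <;> nlinarith [sub_nonneg.2 hab]

theorem exists_abs_iteratedDerivWithin_Icc_le {f : ℝ → ℝ} {a b : ℝ} {n : ℕ} (hab : a < b)
    (hn : n ≠ 0) (hf : ContDiffOn ℝ n f (Icc a b)) :
    ∃ M, ∀ x, |iteratedDerivWithin n f (Icc a b) x| ≤ M := by
  obtain ⟨M, hM⟩ := isCompact_Icc.exists_bound_of_continuousOn
    (hf.continuousOn_iteratedDerivWithin le_rfl (uniqueDiffOn_Icc hab))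
  refine ⟨M, fun x ↦ ?_⟩
  by_cases hx : x ∈ Icc a b
  · exact hM x hx
  obtain ⟨k, rfl⟩ := Nat.exists_eq_succ_of_ne_zero hn
  rw [iteratedDerivWithin_succ, derivWithin_zero_of_notMem_closure (by rwa [closure_Icc]),
    abs_zero]
  exact (norm_nonneg _).trans (hM a (left_mem_Icc.2 hab.le))

theorem exists_abs_trapezoidal_error_le_of_contDiffOn {f : ℝ → ℝ}
    (hf : ContDiffOn ℝ 2 f (Icc 0 1)) :
    ∃ C > 0, ∀ n : ℕ, 0 < n →
      |trapezoidal_error f n 0 1| ≤ C / (n : ℝ) ^ (3 / 2 : ℝ) := by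
  obtain ⟨M, hM⟩ := exists_abs_iteratedDerivWithin_Icc_le zero_lt_one two_ne_zero hf
  refine ⟨|M| + 1, by positivity, fun n hn ↦ ?_⟩
  have hn1 : (1 : ℝ) ≤ n := Nat.one_le_cast.2 hn
  have hpow : (n : ℝ) ^ (3 / 2 : ℝ) ≤ 12 * n ^ 2 :=
    calc (n : ℝ) ^ (3 / 2 : ℝ) ≤ (n : ℝ) ^ (2 : ℝ) :=
          Real.rpow_le_rpow_of_exponent_le hn1 (by norm_num)
      _ ≤ 12 * n ^ 2 := by rw [Real.rpow_two]; nlinarith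
  have key := trapezoidal_error_le_of_c2 (f := f) (a := 0) (b := 1)
    (by rwa [Set.uIcc_of_le zero_le_one]) (by rwa [Set.uIcc_of_le zero_le_one]) hn
  calc _ ≤ |1 - 0| ^ 3 * M / (12 * n ^ 2) := key
    _ ≤ (|M| + 1) / (12 * n ^ 2) := by
        rw [sub_zero, abs_one, one_pow, one_mul]
        gcongr
        linarith [le_abs_self M]
    _ ≤ (|M| + 1) / (n : ℝ) ^ (3 / 2 : ℝ) := by gcongr

theorem abs_trapezoidal_error_one_rpow_le {p a b : ℝ} (hp₀ : 1 / 2 ≤ p) (hp₁ : p ≤ 3 / 2)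
    (ha₀ : 0 < a) (ha₁ : a ≤ 1) (hab : a ≤ b) :
    |trapezoidal_error (fun x ↦ x ^ p) 1 a b| ≤ (b - a) ^ 3 * a ^ (-(3 / 2 : ℝ)) / 16 := by
  have hpos (x : ℝ) (hx : x ∈ Icc a b) : 0 < x := ha₀.trans_le hx.1
  have hcoef : |p * (p - 1)| ≤ 3 / 4 := by
    rw [abs_le]; constructor <;> nlinarith
  have hbound (x : ℝ) (hx : x ∈ Icc a b) :
      |p * ((p - 1) * x ^ (p - 1 - 1))| ≤ 3 / 4 * a ^ (-(3 / 2 : ℝ)) := by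
    have hpow : x ^ (p - 1 - 1) ≤ a ^ (-(3 / 2 : ℝ)) :=
      calc x ^ (p - 1 - 1) ≤ a ^ (p - 1 - 1) :=
            Real.rpow_le_rpow_of_nonpos ha₀ hx.1 (by linarith)
        _ ≤ a ^ (-(3 / 2 : ℝ)) := Real.rpow_le_rpow_of_exponent_ge ha₀ ha₁ (by linarith)
    rw [← mul_assoc, abs_mul, abs_of_pos (Real.rpow_pos_of_pos (hpos x hx) _)]
    exact mul_le_mul hcoef hpow (Real.rpow_nonneg (hpos x hx).le _) (by norm_num)
  have key := abs_trapezoidal_error_le_of_hasDerivWithinAt hab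
    (fun x hx ↦ (Real.hasDerivAt_rpow_const (Or.inl (hpos x hx).ne')).hasDerivWithinAt)
    (fun x hx ↦
      ((Real.hasDerivAt_rpow_const (Or.inl (hpos x hx).ne')).const_mul p).hasDerivWithinAt)
    hbound one_pos
  exact key.trans_eq (by ring)

theorem abs_trapezoidal_error_one_rpow_zero_le {p h : ℝ} (hp : 1 / 2 ≤ p) (h₀ : 0 < h)
    (h₁ : h ≤ 1) :
    |trapezoidal_error (fun x ↦ x ^ p) 1 0 h| ≤ h ^ (3 / 2 : ℝ) := by
  refine (abs_trapezoidal_error_one_le_of_monotoneOn h₀.le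
    ((Real.monotoneOn_rpow_Ici_of_exponent_nonneg (by linarith)).mono
      Icc_subset_Ici_self)).trans ?_
  rw [sub_zero, Real.zero_rpow (by linarith), sub_zero, ← Real.rpow_one_add' h₀.le (by linarith)]
  exact Real.rpow_le_rpow_of_exponent_ge h₀ h₁ (by linarith)

theorem exists_abs_trapezoidal_error_rpow_le {p : ℝ} (hp₀ : 1 / 2 ≤ p) (hp₁ : p ≤ 3 / 2) :
    ∃ C > 0, ∀ n : ℕ, 0 < n →
      |trapezoidal_error (fun x ↦ x ^ p) n 0 1| ≤ C / (n : ℝ) ^ (3 / 2 : ℝ) := by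
  set S := ∑' i : ℕ, (((i : ℝ) + 1) ^ (3 / 2 : ℝ))⁻¹
  have hsum : Summable fun i : ℕ ↦ (((i : ℝ) + 1) ^ (3 / 2 : ℝ))⁻¹ := by
    have := (summable_nat_add_iff 1).2
      (Real.summable_nat_rpow_inv.2 (by norm_num : (1 : ℝ) < 3 / 2))
    simpa only [Nat.cast_add, Nat.cast_one] using this
  have hS : 0 ≤ S := tsum_nonneg fun i ↦ by positivity
  refine ⟨1 + S / 16, by positivity, fun n hn ↦ ?_⟩
  obtain ⟨m, rfl⟩ := Nat.exists_eq_add_one_of_ne_zero hn.ne'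
  set t : ℝ := ((m + 1 : ℕ) : ℝ) ^ (3 / 2 : ℝ)
  have hnR : (0 : ℝ) < (m + 1 : ℕ) := by positivity
  have ht : 0 < t := by positivity
  have ht2 : t ^ 2 = ((m + 1 : ℕ) : ℝ) ^ 3 := by
    rw [← Real.rpow_natCast, ← Real.rpow_mul hnR.le]; norm_num
  have hfirst : |trapezoidal_error (fun x ↦ x ^ p) 1 0 (1 / (m + 1 : ℕ))| ≤ 1 / t := by
    refine (abs_trapezoidal_error_one_rpow_zero_le hp₀ (by positivity) ?_).trans_eq ?_
    · rw [div_le_one hnR]; exact_mod_cast Nat.le_add_left 1 m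
    · rw [Real.div_rpow zero_le_one hnR.le, Real.one_rpow]
  have hinterior (i : ℕ) (hi : i ∈ range m) :
      |trapezoidal_error (fun x ↦ x ^ p) 1 ((i + 1 : ℕ) / (m + 1 : ℕ))
          ((i + 1 + 1 : ℕ) / (m + 1 : ℕ))| ≤ (((i : ℝ) + 1) ^ (3 / 2 : ℝ))⁻¹ / (16 * t) := by
    have hi' : ((i + 1 : ℕ) : ℝ) ≤ (m + 1 : ℕ) := by
      exact_mod_cast Nat.le_succ_of_le (mem_range.1 hi)
    refine (abs_trapezoidal_error_one_rpow_le hp₀ hp₁ (by positivity)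
      ((div_le_one hnR).2 hi') (by gcongr; omega)).trans_eq ?_
    rw [Real.rpow_neg (by positivity), Real.div_rpow (by positivity) hnR.le, inv_div]
    push_cast at ht2 ⊢
    field_simp
    rw [← ht2, sq]
    push_cast [t]
    ring
  rw [trapezoidal_error_zero_one_eq_sum hn
    ((Real.continuous_rpow_const (by linarith)).intervalIntegrable _ _)]
  calc _ ≤ ∑ i ∈ range (m + 1),
        |trapezoidal_error (fun x ↦ x ^ p) 1 (i / (m + 1 : ℕ)) ((i + 1) / (m + 1 : ℕ))| :=
        abs_sum_le_sum_abs _ _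
    _ ≤ 1 / t + ∑ i ∈ range m, (((i : ℝ) + 1) ^ (3 / 2 : ℝ))⁻¹ / (16 * t) := by
        rw [sum_range_succ', add_comm]
        gcongr with i hi
        · simpa using hfirst
        · simpa using hinterior i hi
    _ ≤ 1 / t + S / (16 * t) := by
        rw [← sum_div]
        gcongr
        exact hsum.sum_le_tsum _ fun i _ ↦ by positivity
    _ = (1 + S / 16) / t := by field_simp

theorem exists_abs_trapezoidal_error_one_sub_rpow_le {p : ℝ} (hp₀ : 1 / 2 ≤ p)
    (hp₁ : p ≤ 3 / 2) :
    ∃ C > 0, ∀ n : ℕ, 0 < n →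
      |trapezoidal_error (fun x ↦ (1 - x) ^ p) n 0 1| ≤ C / (n : ℝ) ^ (3 / 2 : ℝ) := by
  obtain ⟨C, hC, hbound⟩ := exists_abs_trapezoidal_error_rpow_le hp₀ hp₁
  refine ⟨C, hC, fun n hn ↦ ?_⟩
  simpa [trapezoidal_error_comp_sub_left (· ^ p) 1 hn] using hbound n hn

theorem riemann_sum_eq_trapezoidal_integral (f : ℝ → ℝ) (n : ℕ) :
    1 / (2 * (n : ℝ)) * f 0 + 1 / (2 * (n : ℝ)) * f 1 +
        ∑ k ∈ Finset.Icc 1 (n - 1), 1 / (n : ℝ) * f ((k : ℝ) / n) =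
      trapezoidal_integral f n 0 1 := by
  rcases n with _ | m
  · simp [trapezoidal_integral]
  rw [trapezoidal_integral, ← Finset.Ico_add_one_right_eq_Icc, sum_Ico_eq_sum_range, ← mul_sum]
  simp only [add_tsub_cancel_right, Nat.cast_add, Nat.cast_one, zero_add, sub_zero, mul_one,
    add_comm (1 : ℝ)]
  field_simp

/-- Proposition 1, item 1, for z₀ = 0: if F₁(x) = c₁(1-x)^{1/2} + c₂(1-x)^{3/2} + Ft(x)
on [0,1] with Ft ∈ C²[0,1], then the trapezoid-type Riemann sum error Rₙ satisfies
|Rₙ| ≤ L₁ / n^{3/2} for all n ≥ N. -/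
theorem riemann_error_sqrt_trapezoid_zero
    (N : ℕ) (hN : 0 < N) (F₁ Ft : ℝ → ℝ) (c₁ c₂ : ℝ)
    (hFt : ContDiffOn ℝ 2 Ft (Set.Icc (0 : ℝ) 1))
    (hrep : ∀ x ∈ Set.Icc (0 : ℝ) 1,
      F₁ x = c₁ * (1 - x) ^ ((1 : ℝ)/2) + c₂ * (1 - x) ^ ((3 : ℝ)/2) + Ft x) :
    ∃ L₁ > (0 : ℝ), ∀ n : ℕ, N ≤ n →
      |(∫ x in (0 : ℝ)..1, F₁ x) -
        ((1/(2*(n : ℝ))) * F₁ 0 + (1/(2*(n : ℝ))) * F₁ 1 +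
          ∑ k ∈ Finset.Icc 1 (n - 1), (1/(n : ℝ)) * F₁ ((k : ℝ)/(n : ℝ)))|
        ≤ L₁ / (n : ℝ) ^ ((3 : ℝ)/2) := by
  obtain ⟨C₁, hC₁, hE₁⟩ :=
    exists_abs_trapezoidal_error_one_sub_rpow_le (p := 1 / 2) le_rfl (by norm_num)
  obtain ⟨C₂, hC₂, hE₂⟩ :=
    exists_abs_trapezoidal_error_one_sub_rpow_le (p := 3 / 2) (by norm_num) le_rfl
  obtain ⟨C₃, hC₃, hE₃⟩ := exists_abs_trapezoidal_error_le_of_contDiffOn hFt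
  refine ⟨|c₁| * C₁ + |c₂| * C₂ + C₃, by positivity, fun n hn ↦ ?_⟩
  have hn₀ : 0 < n := hN.trans_le hn
  have hint (c p : ℝ) (hp : 0 ≤ p) :
      IntervalIntegrable (fun x : ℝ ↦ c * (1 - x) ^ p) volume 0 1 :=
    (continuous_const.mul ((continuous_const.sub continuous_id).rpow_const
      fun _ ↦ Or.inr hp)).intervalIntegrable _ _
  have hsplit : trapezoidal_error F₁ n 0 1 =
      c₁ * trapezoidal_error (fun x ↦ (1 - x) ^ ((1 : ℝ) / 2)) n 0 1 +
        c₂ * trapezoidal_error (fun x ↦ (1 - x) ^ ((3 : ℝ) / 2)) n 0 1 +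
          trapezoidal_error Ft n 0 1 := by
    rw [trapezoidal_error_congr n zero_le_one hrep,
      trapezoidal_error_add _ ((hint c₁ _ (by norm_num)).add (hint c₂ _ (by norm_num)))
        (hFt.continuousOn.intervalIntegrable_of_Icc zero_le_one),
      trapezoidal_error_add _ (hint c₁ _ (by norm_num)) (hint c₂ _ (by norm_num)),
      trapezoidal_error_const_mul, trapezoidal_error_const_mul]
  rw [riemann_sum_eq_trapezoidal_integral, ← neg_sub, abs_neg, ← trapezoidal_error, hsplit]
  calc _ ≤ |c₁| * (C₁ / (n : ℝ) ^ ((3 : ℝ)/2)) + |c₂| * (C₂ / (n : ℝ) ^ ((3 : ℝ)/2)) +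
        C₃ / (n : ℝ) ^ ((3 : ℝ)/2) := by
        grw [abs_add_three, abs_mul, abs_mul, hE₁ n hn₀, hE₂ n hn₀, hE₃ n hn₀]
    _ = _ := by ring
end

section
/- Let N ∈ ℕ and let F₂ : [-1, 1) → ℝ be a function that can be represented as F₂(x) = c₁(1-x)^{-1/2} + c₂(1-x)^{1/2} + F̃₂(x), where c₁ > 0, c₂ ∈ ℝ, and F̃₂ is continuously differentiable on [-1, 1]. Then there exists a constant L₂ > 0 (depending on F₂ and N) such that for all n ≥ N, ∫_{-1}^{1} F₂(x) dx − Σ_{k = -n}^{n-1} (1/n) F₂(k/n) ≤ L₂ / n^{1/2}. -/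
open MeasureTheory Set

/-!
Write `F₂ = c₁ g + h` on `[-1, 1)` with `g x = (1 - x) ^ (-1/2)` and `h x = c₂ √(1 - x) + F̃₂ x`,
and let `δ = 1/n` be the mesh. Since `g` is increasing, on every cell but the last its integral is
at most `δ` times its value at the right endpoint, so the left sum of `g` falls short of `∫ g` by
at most the integral over the last cell, `2 √δ`. The function `h` is `1/2`-Hölder plus Lipschitz
(`F̃₂` is `C¹`, with Lipschitz constant `K`), so on each of the `2n` cells it stays within
`|c₂| √δ + K δ` of its left value. Both errors are `O(√δ) = O(n^{-1/2})`.
-/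

noncomputable def leftRiemannError (f : ℝ → ℝ) (a δ : ℝ) (m : ℕ) : ℝ :=
  (∫ x in a..a + m * δ, f x) - ∑ i ∈ Finset.range m, δ * f (a + i * δ)

section leftRiemannError

variable {f g : ℝ → ℝ} {a δ : ℝ} {m : ℕ}

lemma leftRiemannError_congr (hδ : 0 < δ) (hfg : EqOn f g (Ico a (a + m * δ))) :
    leftRiemannError f a δ m = leftRiemannError g a δ m := by
  have hint : ∫ x in a..a + m * δ, f x = ∫ x in a..a + m * δ, g x :=
    intervalIntegral.integral_congr_Ioo_of_le (le_add_of_nonneg_right (by positivity))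
      (hfg.mono Ioo_subset_Ico_self)
  have hsum : ∀ i ∈ Finset.range m, δ * f (a + i * δ) = δ * g (a + i * δ) := by
    intro i hi
    have hi : (i : ℝ) + 1 ≤ m := by exact_mod_cast Finset.mem_range.1 hi
    rw [hfg ⟨by nlinarith [i.cast_nonneg (α := ℝ)], by nlinarith⟩]
  rw [leftRiemannError, leftRiemannError, hint, Finset.sum_congr rfl hsum]

lemma leftRiemannError_add (hf : IntervalIntegrable f volume a (a + m * δ))
    (hg : IntervalIntegrable g volume a (a + m * δ)) :
    leftRiemannError (fun x => f x + g x) a δ m =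
      leftRiemannError f a δ m + leftRiemannError g a δ m := by
  simp only [leftRiemannError, intervalIntegral.integral_add hf hg, mul_add,
    Finset.sum_add_distrib]
  ring

lemma leftRiemannError_const_mul (c : ℝ) :
    leftRiemannError (fun x => c * f x) a δ m = c * leftRiemannError f a δ m := by
  rw [leftRiemannError, leftRiemannError, intervalIntegral.integral_const_mul, mul_sub,
    Finset.mul_sum]
  congr 1
  exact Finset.sum_congr rfl fun _ _ => mul_left_comm _ _ _

lemma IntervalIntegrable.mono_cell (hδ : 0 ≤ δ) (hf : IntervalIntegrable f volume a (a + m * δ))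
    {k : ℕ} (hk : k < m) : IntervalIntegrable f volume (a + k * δ) (a + (k + 1) * δ) := by
  have hk' : (k : ℝ) + 1 ≤ m := by exact_mod_cast hk
  refine hf.mono_set (uIcc_subset_uIcc ?_ ?_) <;>
    · rw [uIcc_of_le (le_add_of_nonneg_right (by positivity))]
      constructor <;> nlinarith [k.cast_nonneg (α := ℝ)]

lemma leftRiemannError_eq_sum (hδ : 0 ≤ δ) (hf : IntervalIntegrable f volume a (a + m * δ)) :
    leftRiemannError f a δ m =
      ∑ i ∈ Finset.range m, ((∫ x in a + i * δ..a + (i + 1) * δ, f x) - δ * f (a + i * δ)) := by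
  have hcells := intervalIntegral.sum_integral_adjacent_intervals (f := f) (μ := volume) (n := m)
    (a := fun k : ℕ => a + k * δ) fun k hk => by push_cast; exact hf.mono_cell hδ hk
  push_cast at hcells
  rw [zero_mul, add_zero] at hcells
  rw [Finset.sum_sub_distrib, leftRiemannError, hcells]

lemma abs_integral_sub_mul_le {s t C : ℝ} (hst : s ≤ t) (hf : IntervalIntegrable f volume s t)
    (hC : ∀ x ∈ Ioc s t, |f x - f s| ≤ C) :
    |(∫ x in s..t, f x) - (t - s) * f s| ≤ C * (t - s) := by
  have hconst : (t - s) * f s = ∫ _ in s..t, f s := by simp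
  rw [hconst, ← intervalIntegral.integral_sub hf intervalIntegrable_const,
    ← abs_of_nonneg (sub_nonneg.2 hst)]
  exact intervalIntegral.norm_integral_le_of_norm_le_const (f := fun x => f x - f s)
    fun x hx => hC x (uIoc_of_le hst ▸ hx)

lemma abs_leftRiemannError_le {C : ℝ} (hδ : 0 ≤ δ)
    (hf : IntervalIntegrable f volume a (a + m * δ))
    (hosc : ∀ x ∈ Icc a (a + m * δ), ∀ y ∈ Icc a (a + m * δ), |x - y| ≤ δ → |f x - f y| ≤ C) :
    |leftRiemannError f a δ m| ≤ m * δ * C := by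
  rw [leftRiemannError_eq_sum hδ hf]
  refine (Finset.abs_sum_le_sum_abs _ _).trans ?_
  calc _ ≤ ∑ _i ∈ Finset.range m, C * δ := Finset.sum_le_sum fun i hi => by
        have hi' : (i : ℝ) + 1 ≤ m := by exact_mod_cast Finset.mem_range.1 hi
        have hi₀ := i.cast_nonneg (α := ℝ)
        have hcell := abs_integral_sub_mul_le (C := C) (by nlinarith)
          (hf.mono_cell hδ (Finset.mem_range.1 hi)) fun x hx => by
            refine hosc x ⟨?_, ?_⟩ _ ⟨?_, ?_⟩ (abs_le.2 ⟨?_, ?_⟩) <;> nlinarith [hx.1, hx.2]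
        rwa [show a + (i + 1) * δ - (a + i * δ) = δ by ring] at hcell
    _ = m * δ * C := by rw [Finset.sum_const, Finset.card_range, nsmul_eq_mul]; ring

lemma MonotoneOn.integral_le_sum_mul (hδ : 0 < δ) {k : ℕ}
    (hg : MonotoneOn g (Icc a (a + k * δ))) :
    ∫ x in a..a + k * δ, g x ≤ ∑ i ∈ Finset.range k, δ * g (a + (i + 1) * δ) := by
  have hφ : MonotoneOn (fun t => g (a + δ * t)) (Icc 0 (0 + k)) := by
    intro s hs t ht hst
    refine hg ⟨?_, ?_⟩ ⟨?_, ?_⟩ (by nlinarith) <;> nlinarith [hs.1, hs.2, ht.1, ht.2]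
  have hsum := hφ.integral_le_sum
  simp only [zero_add, intervalIntegral.integral_comp_add_mul _ hδ.ne', mul_zero, add_zero,
    smul_eq_mul, inv_mul_le_iff₀ hδ, Finset.mul_sum] at hsum
  calc _ = ∫ x in a..a + δ * k, g x := by rw [mul_comm]
    _ ≤ _ := hsum
    _ = _ := Finset.sum_congr rfl fun i _ => by push_cast; rw [mul_comm δ (_ + 1)]

lemma MonotoneOn.leftRiemannError_succ_le (hδ : 0 < δ) {k : ℕ}
    (hg : MonotoneOn g (Icc a (a + k * δ))) (hga : 0 ≤ g a)
    (hint : IntervalIntegrable g volume a (a + (k + 1 : ℕ) * δ)) :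
    leftRiemannError g a δ (k + 1) ≤ ∫ x in a + k * δ..a + (k + 1 : ℕ) * δ, g x := by
  have hmid : a + k * δ ∈ uIcc a (a + (k + 1 : ℕ) * δ) := by
    rw [uIcc_of_le (by push_cast; nlinarith [k.cast_nonneg (α := ℝ)])]
    constructor <;> push_cast <;> nlinarith [k.cast_nonneg (α := ℝ)]
  have hsplit := intervalIntegral.integral_add_adjacent_intervals
    (hint.mono_set (uIcc_subset_uIcc_left hmid)) (hint.mono_set (uIcc_subset_uIcc_right hmid))
  rw [leftRiemannError, ← hsplit, Finset.sum_range_succ']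
  have := hg.integral_le_sum_mul hδ
  simp only [Nat.cast_add, Nat.cast_one, Nat.cast_zero, zero_mul, add_zero]
  linarith [mul_nonneg hδ.le hga]

end leftRiemannError

lemma sum_Icc_neg_eq_sum_range {M : Type*} [AddCommMonoid M] (f : ℤ → M) (n : ℕ) :
    ∑ k ∈ Finset.Icc (-(n : ℤ)) (n - 1), f k = ∑ i ∈ Finset.range (2 * n), f (i - n) := by
  symm
  refine Finset.sum_nbij' (fun i : ℕ => (i : ℤ) - n) (fun k : ℤ => (k + n).toNat)
    (fun i hi => ?_) (fun k hk => ?_) (fun i _ => by omega) (fun k hk => ?_) fun _ _ => rfl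
  all_goals simp only [Finset.mem_range, Finset.mem_Icc] at *; omega

lemma integral_sub_sum_Icc_eq_leftRiemannError (f : ℝ → ℝ) {n : ℕ} (hn : 0 < n) :
    (∫ x in (-1 : ℝ)..1, f x) - ∑ k ∈ Finset.Icc (-(n : ℤ)) (n - 1), (1 / (n : ℝ)) * f (k / n) =
      leftRiemannError f (-1) (1 / n) (2 * n) := by
  have hn' : (n : ℝ) ≠ 0 := by positivity
  rw [leftRiemannError, sum_Icc_neg_eq_sum_range fun k : ℤ => (1 / (n : ℝ)) * f (k / n)]
  congr 2
  · push_cast; field_simp; ring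
  · funext i
    congr 2
    push_cast; field_simp; ring

lemma monotoneOn_one_sub_rpow {r : ℝ} (hr : r ≤ 0) :
    MonotoneOn (fun x : ℝ => (1 - x) ^ r) (Iio 1) :=
  fun _ _ _ hy hxy => Real.rpow_le_rpow_of_nonpos (sub_pos.2 hy) (by linarith) hr

lemma intervalIntegrable_one_sub_rpow {r : ℝ} (hr : -1 < r) (a b : ℝ) :
    IntervalIntegrable (fun x : ℝ => (1 - x) ^ r) volume a b := by
  simpa using
    (intervalIntegral.intervalIntegrable_rpow' hr (a := 1 - a) (b := 1 - b)).comp_sub_left 1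

lemma integral_one_sub_rpow {r δ : ℝ} (hr : -1 < r) :
    ∫ x in 1 - δ..1, (1 - x) ^ r = δ ^ (r + 1) / (r + 1) := by
  rw [intervalIntegral.integral_comp_sub_left (fun x => x ^ r), sub_self, sub_sub_cancel,
    integral_rpow (Or.inl hr), Real.zero_rpow (by linarith), sub_zero]

lemma leftRiemannError_one_sub_rpow_le {r a δ : ℝ} {k : ℕ} (hr₀ : -1 < r) (hr : r ≤ 0)
    (hδ : 0 < δ) (hend : a + (k + 1 : ℕ) * δ = 1) :
    leftRiemannError (fun x => (1 - x) ^ r) a δ (k + 1) ≤ δ ^ (r + 1) / (r + 1) := by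
  have hlast : a + k * δ = 1 - δ := by push_cast at hend; linarith
  have hmono : MonotoneOn (fun x : ℝ => (1 - x) ^ r) (Icc a (a + k * δ)) :=
    (monotoneOn_one_sub_rpow hr).mono fun x hx => by rw [mem_Iio]; linarith [hx.2]
  have hnonneg : 0 ≤ (1 - a) ^ r := Real.rpow_nonneg (by nlinarith [k.cast_nonneg (α := ℝ)]) r
  have := hmono.leftRiemannError_succ_le hδ hnonneg (intervalIntegrable_one_sub_rpow hr₀ _ _)
  rwa [hlast, hend, integral_one_sub_rpow hr₀] at this

lemma Real.sqrt_le_sqrt_add_sqrt_sub (a b : ℝ) : √a ≤ √b + √(a - b) := by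
  rcases le_total b a with hba | hab
  · rcases le_total 0 b with hb | hb
    · rw [Real.sqrt_le_left (by positivity)]
      nlinarith [Real.sq_sqrt hb, Real.sq_sqrt (sub_nonneg.2 hba), Real.sqrt_nonneg b,
        Real.sqrt_nonneg (a - b)]
    · rw [Real.sqrt_eq_zero_of_nonpos hb, zero_add]
      exact Real.sqrt_le_sqrt (by linarith)
  · linarith [Real.sqrt_le_sqrt hab, Real.sqrt_nonneg (a - b)]

lemma Real.abs_sqrt_sub_sqrt_le (a b : ℝ) : |√a - √b| ≤ √|a - b| := by
  rw [abs_sub_le_iff]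
  constructor
  · linarith [Real.sqrt_le_sqrt_add_sqrt_sub a b, Real.sqrt_le_sqrt (le_abs_self (a - b))]
  · rw [abs_sub_comm]
    linarith [Real.sqrt_le_sqrt_add_sqrt_sub b a, Real.sqrt_le_sqrt (le_abs_self (b - a))]

lemma abs_mul_sqrt_one_sub_add_sub_le {f : ℝ → ℝ} {K : NNReal} {s : Set ℝ}
    (hf : LipschitzOnWith K f s) (c : ℝ) {x y : ℝ} (hx : x ∈ s) (hy : y ∈ s) :
    |(c * √(1 - x) + f x) - (c * √(1 - y) + f y)| ≤ |c| * √|x - y| + K * |x - y| := by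
  have hsqrt : |√(1 - x) - √(1 - y)| ≤ √|x - y| := by
    simpa [abs_sub_comm] using Real.abs_sqrt_sub_sqrt_le (1 - x) (1 - y)
  have hlip : |f x - f y| ≤ K * |x - y| := by
    simpa [Real.dist_eq] using hf.dist_le_mul x hx y hy
  calc |(c * √(1 - x) + f x) - (c * √(1 - y) + f y)|
      = |c * (√(1 - x) - √(1 - y)) + (f x - f y)| := by ring_nf
    _ ≤ |c| * |√(1 - x) - √(1 - y)| + |f x - f y| := by
      rw [← abs_mul]; exact abs_add_le _ _
    _ ≤ |c| * √|x - y| + K * |x - y| := by gcongr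

lemma abs_leftRiemannError_mul_sqrt_one_sub_add_le {f : ℝ → ℝ} {K : NNReal} {a δ : ℝ} {m : ℕ}
    (hδ : 0 ≤ δ) (hf : LipschitzOnWith K f (Icc a (a + m * δ))) (c : ℝ) :
    |leftRiemannError (fun x => c * √(1 - x) + f x) a δ m| ≤ m * δ * (|c| * √δ + K * δ) := by
  have hcont := hf.continuousOn
  refine abs_leftRiemannError_le hδ ?_ fun x hx y hy hxy => ?_
  · exact ContinuousOn.intervalIntegrable_of_Icc (le_add_of_nonneg_right (by positivity))
      (by fun_prop)
  · calc _ ≤ |c| * √|x - y| + K * |x - y| := abs_mul_sqrt_one_sub_add_sub_le hf c hx hy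
      _ ≤ |c| * √δ + K * δ := by gcongr

lemma leftRiemannError_inv_sqrt_add_le {F Ft : ℝ → ℝ} {c₁ c₂ : ℝ} {K : NNReal} {n : ℕ}
    (hn : 0 < n) (hc₁ : 0 ≤ c₁) (hK : LipschitzOnWith K Ft (Icc (-1) 1))
    (hF : ∀ x ∈ Ico (-1 : ℝ) 1, F x = c₁ * (1 - x) ^ (-(1 : ℝ) / 2) + (c₂ * √(1 - x) + Ft x)) :
    leftRiemannError F (-1) (1 / n) (2 * n) ≤ (2 * c₁ + 2 * |c₂| + 2 * K) / √n := by
  set δ : ℝ := 1 / n with hδ_def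
  have hδ : 0 < δ := by positivity
  have hend : -1 + ((2 * n : ℕ) : ℝ) * δ = 1 := by rw [hδ_def]; push_cast; field_simp; ring
  have hsing : leftRiemannError (fun x => (1 - x) ^ (-(1 : ℝ) / 2)) (-1) δ (2 * n) ≤ 2 * √δ := by
    obtain ⟨k, hk⟩ : ∃ k, 2 * n = k + 1 := ⟨2 * n - 1, by omega⟩
    have := leftRiemannError_one_sub_rpow_le (r := -(1 : ℝ) / 2) (by norm_num) (by norm_num) hδ
      (hk ▸ hend)
    rw [hk]
    convert this using 1
    rw [Real.sqrt_eq_rpow]; norm_num; ring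
  replace hK : LipschitzOnWith K Ft (Icc (-1) (-1 + (2 * n : ℕ) * δ)) := by rwa [hend]
  replace hF : EqOn F (fun x => c₁ * (1 - x) ^ (-(1 : ℝ) / 2) + (c₂ * √(1 - x) + Ft x))
      (Ico (-1) (-1 + (2 * n : ℕ) * δ)) := by rw [hend]; exact hF
  have hreg := abs_leftRiemannError_mul_sqrt_one_sub_add_le hδ.le hK c₂
  rw [show ((2 * n : ℕ) : ℝ) * δ = 2 by linarith] at hreg
  have hreg_int : IntervalIntegrable (fun x => c₂ * √(1 - x) + Ft x) volume
      (-1) (-1 + (2 * n : ℕ) * δ) := by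
    have := hK.continuousOn
    exact ContinuousOn.intervalIntegrable_of_Icc (by linarith) (by fun_prop)
  rw [leftRiemannError_congr hδ hF,
    leftRiemannError_add ((intervalIntegrable_one_sub_rpow (by norm_num) _ _).const_mul c₁)
    hreg_int, leftRiemannError_const_mul]
  have hδ_le : δ ≤ √δ := Real.le_sqrt_self_iff.2 (by
    rw [hδ_def, div_le_one (by positivity)]; exact_mod_cast hn)
  have hsqrt : √δ = 1 / √n := by rw [hδ_def, Real.sqrt_div' 1 n.cast_nonneg, Real.sqrt_one]
  calc _ ≤ c₁ * (2 * √δ) + 2 * (|c₂| * √δ + K * δ) := by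
        gcongr; exact (le_abs_self _).trans hreg
    _ ≤ (2 * c₁ + 2 * |c₂| + 2 * K) * √δ := by nlinarith [K.coe_nonneg]
    _ = _ := by rw [hsqrt]; ring

/-- Proposition 2, upper bound, for z₀ = -1: if F₂(x) = c₁(1-x)^{-1/2} + c₂(1-x)^{1/2} + Ft(x)
on [-1,1) with c₁ > 0 and Ft ∈ C¹[-1,1], then the error of the left Riemann sum satisfies
∫_{-1}^1 F₂ − Σ_{k=-n}^{n-1} (1/n) F₂(k/n) ≤ L₂ / √n for all n ≥ N. -/
theorem riemann_error_inv_sqrt_upper_neg_one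
    (N : ℕ) (hN : 0 < N) (F₂ Ft : ℝ → ℝ) (c₁ c₂ : ℝ) (hc₁ : 0 < c₁)
    (hFt : ContDiffOn ℝ 1 Ft (Set.Icc (-1 : ℝ) 1))
    (hrep : ∀ x ∈ Set.Ico (-1 : ℝ) 1,
      F₂ x = c₁ * (1 - x) ^ (-(1 : ℝ)/2) + c₂ * (1 - x) ^ ((1 : ℝ)/2) + Ft x) :
    ∃ L₂ > (0 : ℝ), ∀ n : ℕ, N ≤ n →
      (∫ x in (-1 : ℝ)..1, F₂ x) -
          ∑ k ∈ Finset.Icc (-(n : ℤ)) ((n : ℤ) - 1), (1/(n : ℝ)) * F₂ ((k : ℝ)/(n : ℝ))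
        ≤ L₂ / Real.sqrt n := by
  obtain ⟨K, hK⟩ := hFt.exists_lipschitzOnWith one_ne_zero (convex_Icc (-1 : ℝ) 1) isCompact_Icc
  have hF : ∀ x ∈ Ico (-1 : ℝ) 1,
      F₂ x = c₁ * (1 - x) ^ (-(1 : ℝ) / 2) + (c₂ * √(1 - x) + Ft x) := fun x hx => by
    rw [hrep x hx, Real.sqrt_eq_rpow, one_div, add_assoc]
  refine ⟨2 * c₁ + 2 * |c₂| + 2 * K, by positivity, fun n hn => ?_⟩
  have hn₀ : 0 < n := hN.trans_le hn
  rw [integral_sub_sum_Icc_eq_leftRiemannError F₂ hn₀]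
  exact leftRiemannError_inv_sqrt_add_le hn₀ hc₁.le hK hF
end

section
/- Let F₂ : [-1, 1) → ℝ be a function that can be represented as F₂(x) = c₁(1-x)^{-1/2} + c₂(1-x)^{1/2} + F̃₂(x), where c₁ > 0, c₂ ∈ ℝ, and F̃₂ is continuously differentiable on [-1, 1]. Let c̄₁ > c₁ and let c̲₁ ∈ ((2/(3√2−2))·c₁, c₁). Then there exists δ ∈ (0, 1) such that for all x ∈ [1−δ, 1): c̲₁(1−x)^{-1/2} ≤ F₂(x) ≤ c̄₁(1−x)^{-1/2} and (1/2)·c̲₁(1−x)^{-3/2} ≤ F₂′(x) ≤ (1/2)·c̄₁(1−x)^{-3/2}. -/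
open Set Filter Topology Asymptotics

/-! Near `x = 1` the term `c₁ (1 - x)^(-1/2)` dominates `F₂`, and its derivative
`(c₁/2) (1 - x)^(-3/2)` dominates `F₂'`: the remainders `c₂ (1 - x)^(1/2) + F̃₂` and
`-(c₂/2) (1 - x)^(-1/2) + F̃₂'` are of strictly lower order because `F̃₂` and `F̃₂'` are bounded
on `[-1, 1]`. A remainder that is `o(φ)` cannot push `F₂` outside `[cmin φ, cmax φ]` once its
relative size drops below `min (c₁ - cmin) (cmax - c₁)`, which happens on some `[1 - δ, 1)`. -/

lemma eventually_mul_le_and_le_mul_of_isLittleO {α : Type*} {l : Filter α} {f φ : α → ℝ}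
    {a b c : ℝ} (hφ : ∀ᶠ x in l, 0 < φ x) (h : (fun x => f x - c * φ x) =o[l] φ)
    (ha : a < c) (hb : c < b) :
    ∀ᶠ x in l, a * φ x ≤ f x ∧ f x ≤ b * φ x := by
  filter_upwards [hφ, h.bound (lt_min (sub_pos.2 ha) (sub_pos.2 hb))] with x hφx hx
  rw [Real.norm_eq_abs, Real.norm_eq_abs, abs_of_pos hφx, abs_le] at hx
  have hca := mul_le_mul_of_nonneg_right (min_le_left (c - a) (b - c)) hφx.le
  have hbc := mul_le_mul_of_nonneg_right (min_le_right (c - a) (b - c)) hφx.le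
  constructor <;> linarith

lemma exists_Ico_subset_of_eventually_nhdsLT {p : ℝ → Prop} {a ε : ℝ}
    (h : ∀ᶠ x in 𝓝[<] a, p x) (hε : 0 < ε) :
    ∃ δ ∈ Ioo 0 ε, ∀ x ∈ Ico (a - δ) a, p x := by
  obtain ⟨l, hl : l < a, hsub⟩ := mem_nhdsLT_iff_exists_Ico_subset.1 h
  refine ⟨min (a - l) (ε / 2), ⟨by simp [sub_pos.2 hl, hε], by simp [hε]⟩, fun x hx => hsub ?_⟩
  exact ⟨le_trans (by linarith [min_le_left (a - l) (ε / 2)]) hx.1, hx.2⟩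

lemma tendsto_one_sub_nhdsLT_one : Tendsto (fun x : ℝ => 1 - x) (𝓝[<] 1) (𝓝[>] 0) :=
  tendsto_nhdsWithin_iff.2
    ⟨((continuous_const.sub continuous_id).tendsto' 1 0 (sub_self 1)).mono_left nhdsWithin_le_nhds,
      eventually_nhdsWithin_of_forall fun x (hx : x < 1) => sub_pos.2 hx⟩

lemma isLittleO_rpow_rpow_nhdsGT_zero {p q : ℝ} (hpq : p < q) :
    (fun t : ℝ => t ^ q) =o[𝓝[>] 0] fun t => t ^ p := by
  have hlim : Tendsto (fun t : ℝ => t ^ (q - p)) (𝓝[>] 0) (𝓝 0) := by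
    have := (Real.continuousAt_rpow_const 0 (q - p) (Or.inr (sub_pos.2 hpq).le)).tendsto
    rw [Real.zero_rpow (sub_pos.2 hpq).ne'] at this
    exact this.mono_left nhdsWithin_le_nhds
  refine (((isLittleO_one_iff ℝ).2 hlim).mul_isBigO (isBigO_refl (fun t : ℝ => t ^ p) _)).congr'
    ?_ (by simp)
  filter_upwards [self_mem_nhdsWithin] with t ht
  rw [← Real.rpow_add ht, sub_add_cancel]

lemma isLittleO_one_sub_rpow {p q : ℝ} (hpq : p < q) :
    (fun x : ℝ => (1 - x) ^ q) =o[𝓝[<] 1] fun x => (1 - x) ^ p :=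
  (isLittleO_rpow_rpow_nhdsGT_zero hpq).comp_tendsto tendsto_one_sub_nhdsLT_one

lemma isLittleO_one_sub_rpow_of_isBigO_one {f : ℝ → ℝ} {p : ℝ} (hp : p < 0)
    (hf : f =O[𝓝[<] 1] fun _ => (1 : ℝ)) : f =o[𝓝[<] 1] fun x => (1 - x) ^ p :=
  hf.trans_isLittleO (by simpa using isLittleO_one_sub_rpow hp)

lemma ContinuousOn.isBigO_one_nhdsLT {f : ℝ → ℝ} {a b : ℝ} (hf : ContinuousOn f (Icc a b))
    (hab : a < b) : f =O[𝓝[<] b] fun _ => (1 : ℝ) :=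
  ((hf.continuousWithinAt (right_mem_Icc.2 hab.le)).tendsto.mono_left
    (nhdsWithin_le_of_mem (Icc_mem_nhdsLT hab))).isBigO_one ℝ

lemma eventually_one_sub_rpow_pos (p : ℝ) : ∀ᶠ x in 𝓝[<] (1 : ℝ), 0 < (1 - x) ^ p := by
  filter_upwards [self_mem_nhdsWithin] with x hx
  exact Real.rpow_pos_of_pos (sub_pos.2 hx) p

lemma hasDerivAt_one_sub_rpow {x : ℝ} (hx : x < 1) (p : ℝ) :
    HasDerivAt (fun y => (1 - y) ^ p) (-p * (1 - x) ^ (p - 1)) x := by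
  simpa using ((hasDerivAt_id x).const_sub 1).rpow_const (p := p) (Or.inl (sub_pos.2 hx).ne')

section LeadingTerm

variable {F F' G : ℝ → ℝ} {a c₁ c₂ : ℝ}

lemma isLittleO_sub_mul_one_sub_rpow (hG : ContinuousOn G (Icc a 1)) (ha : a < 1)
    (hrep : ∀ x ∈ Ico a 1,
      F x = c₁ * (1 - x) ^ (-(1 : ℝ)/2) + c₂ * (1 - x) ^ ((1 : ℝ)/2) + G x) :
    (fun x => F x - c₁ * (1 - x) ^ (-(1 : ℝ)/2)) =o[𝓝[<] 1]
      fun x => (1 - x) ^ (-(1 : ℝ)/2) := by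
  have hrem : (fun x => F x - c₁ * (1 - x) ^ (-(1 : ℝ)/2)) =ᶠ[𝓝[<] 1]
      fun x => c₂ * (1 - x) ^ ((1 : ℝ)/2) + G x := by
    filter_upwards [Ico_mem_nhdsLT ha] with x hx
    rw [hrep x hx]
    ring
  refine hrem.trans_isLittleO (IsLittleO.add ?_ ?_)
  · exact (isLittleO_one_sub_rpow (by norm_num)).const_mul_left c₂
  · exact isLittleO_one_sub_rpow_of_isBigO_one (by norm_num) (hG.isBigO_one_nhdsLT ha)

lemma deriv_eq_of_hasDerivWithinAt_of_eq_rpow (hG : ContDiffOn ℝ 1 G (Icc a 1))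
    (hrep : ∀ x ∈ Ico a 1,
      F x = c₁ * (1 - x) ^ (-(1 : ℝ)/2) + c₂ * (1 - x) ^ ((1 : ℝ)/2) + G x)
    (hderiv : ∀ x ∈ Ico a 1, HasDerivWithinAt F (F' x) (Ico a 1) x) {x : ℝ} (hx : x ∈ Ioo a 1) :
    F' x = c₁ / 2 * (1 - x) ^ (-(3 : ℝ)/2) - c₂ / 2 * (1 - x) ^ (-(1 : ℝ)/2)
      + derivWithin G (Icc a 1) x := by
  have hG' : HasDerivAt G (derivWithin G (Icc a 1) x) x :=
    (hG.differentiableOn one_ne_zero x (Ioo_subset_Icc_self hx)).hasDerivWithinAt.hasDerivAt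
      (Icc_mem_nhds hx.1 hx.2)
  have hF : HasDerivAt F _ x :=
    ((((hasDerivAt_one_sub_rpow hx.2 _).const_mul c₁).add
      ((hasDerivAt_one_sub_rpow hx.2 _).const_mul c₂)).add hG').congr_of_eventuallyEq
      (eventually_of_mem (Ico_mem_nhds hx.1 hx.2) hrep)
  rw [((hderiv x (Ioo_subset_Ico_self hx)).hasDerivAt (Ico_mem_nhds hx.1 hx.2)).unique hF,
    show -(1 : ℝ)/2 - 1 = -(3 : ℝ)/2 by norm_num, show (1 : ℝ)/2 - 1 = -(1 : ℝ)/2 by norm_num]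
  ring

lemma isLittleO_deriv_sub_mul_one_sub_rpow (hG : ContDiffOn ℝ 1 G (Icc a 1)) (ha : a < 1)
    (hrep : ∀ x ∈ Ico a 1,
      F x = c₁ * (1 - x) ^ (-(1 : ℝ)/2) + c₂ * (1 - x) ^ ((1 : ℝ)/2) + G x)
    (hderiv : ∀ x ∈ Ico a 1, HasDerivWithinAt F (F' x) (Ico a 1) x) :
    (fun x => F' x - c₁ / 2 * (1 - x) ^ (-(3 : ℝ)/2)) =o[𝓝[<] 1]
      fun x => (1 - x) ^ (-(3 : ℝ)/2) := by
  have hrem : (fun x => F' x - c₁ / 2 * (1 - x) ^ (-(3 : ℝ)/2)) =ᶠ[𝓝[<] 1]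
      fun x => -(c₂ / 2) * (1 - x) ^ (-(1 : ℝ)/2) + derivWithin G (Icc a 1) x := by
    filter_upwards [Ioo_mem_nhdsLT ha] with x hx
    rw [deriv_eq_of_hasDerivWithinAt_of_eq_rpow hG hrep hderiv hx]
    ring
  refine hrem.trans_isLittleO (IsLittleO.add ?_ ?_)
  · exact (isLittleO_one_sub_rpow (by norm_num)).const_mul_left _
  · exact isLittleO_one_sub_rpow_of_isBigO_one (by norm_num)
      ((hG.continuousOn_derivWithin (uniqueDiffOn_Icc ha) le_rfl).isBigO_one_nhdsLT ha)

end LeadingTerm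

theorem delta_choice_inv_sqrt_general
    (F₂ F₂' Ft : ℝ → ℝ) (c₁ c₂ cmax cmin : ℝ)
    (hFt : ContDiffOn ℝ 1 Ft (Set.Icc (-1 : ℝ) 1))
    (hrep : ∀ x ∈ Set.Ico (-1 : ℝ) 1,
      F₂ x = c₁ * (1 - x) ^ (-(1 : ℝ)/2) + c₂ * (1 - x) ^ ((1 : ℝ)/2) + Ft x)
    (hderiv : ∀ x ∈ Set.Ico (-1 : ℝ) 1, HasDerivWithinAt F₂ (F₂' x) (Set.Ico (-1 : ℝ) 1) x)
    (hcmax : c₁ < cmax)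
    (hcmin : cmin ∈ Set.Ioo (2 / (3 * Real.sqrt 2 - 2) * c₁) c₁) :
    ∃ δ ∈ Set.Ioo (0 : ℝ) 1, ∀ x ∈ Set.Ico (1 - δ) (1 : ℝ),
      cmin * (1 - x) ^ (-(1 : ℝ)/2) ≤ F₂ x ∧
      F₂ x ≤ cmax * (1 - x) ^ (-(1 : ℝ)/2) ∧
      (1/2) * cmin * (1 - x) ^ (-(3 : ℝ)/2) ≤ F₂' x ∧
      F₂' x ≤ (1/2) * cmax * (1 - x) ^ (-(3 : ℝ)/2) := by
  have hF₂ := eventually_mul_le_and_le_mul_of_isLittleO (eventually_one_sub_rpow_pos _)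
    (isLittleO_sub_mul_one_sub_rpow hFt.continuousOn (by norm_num) hrep) hcmin.2 hcmax
  have hF₂' := eventually_mul_le_and_le_mul_of_isLittleO (eventually_one_sub_rpow_pos _)
    (isLittleO_deriv_sub_mul_one_sub_rpow hFt (by norm_num) hrep hderiv)
    (div_lt_div_of_pos_right hcmin.2 two_pos) (div_lt_div_of_pos_right hcmax two_pos)
  obtain ⟨δ, hδ, hbounds⟩ := exists_Ico_subset_of_eventually_nhdsLT (hF₂.and hF₂') one_pos
  refine ⟨δ, hδ, fun x hx => ?_⟩
  obtain ⟨⟨hlo, hhi⟩, hlo', hhi'⟩ := hbounds x hx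
  exact ⟨hlo, hhi, by linarith, by linarith⟩

/-- Choice of δ in the proof of Proposition 2: if F₂(x) = c₁(1-x)^{-1/2} + c₂(1-x)^{1/2} + Ft(x)
on [-1,1) with c₁ > 0 and Ft ∈ C¹[-1,1], cmax > c₁ and cmin ∈ (2c₁/(3√2−2), c₁), then there is
δ ∈ (0,1) such that for x ∈ [1−δ, 1):
cmin(1−x)^{-1/2} ≤ F₂(x) ≤ cmax(1−x)^{-1/2} and
(1/2)cmin(1−x)^{-3/2} ≤ F₂′(x) ≤ (1/2)cmax(1−x)^{-3/2}. -/
theorem delta_choice_inv_sqrt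
    (F₂ F₂' Ft : ℝ → ℝ) (c₁ c₂ cmax cmin : ℝ) (hc₁ : 0 < c₁)
    (hFt : ContDiffOn ℝ 1 Ft (Set.Icc (-1 : ℝ) 1))
    (hrep : ∀ x ∈ Set.Ico (-1 : ℝ) 1,
      F₂ x = c₁ * (1 - x) ^ (-(1 : ℝ)/2) + c₂ * (1 - x) ^ ((1 : ℝ)/2) + Ft x)
    (hderiv : ∀ x ∈ Set.Ico (-1 : ℝ) 1, HasDerivWithinAt F₂ (F₂' x) (Set.Ico (-1 : ℝ) 1) x)
    (hcmax : c₁ < cmax)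
    (hcmin : cmin ∈ Set.Ioo (2 / (3 * Real.sqrt 2 - 2) * c₁) c₁) :
    ∃ δ ∈ Set.Ioo (0 : ℝ) 1, ∀ x ∈ Set.Ico (1 - δ) (1 : ℝ),
      cmin * (1 - x) ^ (-(1 : ℝ)/2) ≤ F₂ x ∧
      F₂ x ≤ cmax * (1 - x) ^ (-(1 : ℝ)/2) ∧
      (1/2) * cmin * (1 - x) ^ (-(3 : ℝ)/2) ≤ F₂' x ∧
      F₂' x ≤ (1/2) * cmax * (1 - x) ^ (-(3 : ℝ)/2) :=
  delta_choice_inv_sqrt_general F₂ F₂' Ft c₁ c₂ cmax cmin hFt hrep hderiv hcmax hcmin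
end

section
/- Let F : [-1, 1) → ℝ be differentiable with derivative F′, let c > 0 and δ ∈ (0, 1) be such that F′(x) ≥ (1/2)·c·(1−x)^{-3/2} for all x ∈ [1−δ, 1). Then for every integer n ≥ 2/δ: ∫_{1−2/n}^{1−1/n} (1 − 1/n − x) F′(x) dx + ∫_{1−1/n}^{1} (1−x) F′(x) dx ≥ ((3√2 − 2)/2) · c / √n. -/
/-!
With `h = 1/n`, the hypothesis bounds `F'` below by `(c/2)(1-x)^(-3/2)` on `[1 - 2h, 1)`, where
both weights are nonnegative, so each lower Lebesgue integral dominates the integral of the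
weight times this minorant. After the substitution `u = 1 - x` these are
`(c/2) ∫_h^{2h} (u - h) u^(-3/2) du = (c/2)(3√2 - 4)√h` and `(c/2) ∫_0^h u^(-1/2) du = c√h`,
whose sum is `((3√2 - 2)/2) c / √n`.
-/

open MeasureTheory Set

theorem MeasureTheory.ofReal_integral_le_lintegral_ofReal {α : Type*} [MeasurableSpace α]
    {μ : Measure α} (f : α → ℝ) :
    ENNReal.ofReal (∫ x, f x ∂μ) ≤ ∫⁻ x, ENNReal.ofReal (f x) ∂μ := by
  by_cases hf : Integrable f μ
  · rw [integral_eq_lintegral_pos_part_sub_lintegral_neg_part hf]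
    exact ENNReal.ofReal_le_of_le_toReal (sub_le_self _ ENNReal.toReal_nonneg)
  · simp [integral_undef hf]

theorem MeasureTheory.ofReal_setIntegral_le_setLIntegral_of_le {α : Type*} [MeasurableSpace α]
    {μ : Measure α} {f g : α → ℝ} {s : Set α} (hs : MeasurableSet s)
    (hgf : ∀ x ∈ s, g x ≤ f x) :
    ENNReal.ofReal (∫ x in s, g x ∂μ) ≤ ∫⁻ x in s, ENNReal.ofReal (f x) ∂μ :=
  (ofReal_integral_le_lintegral_ofReal g).trans
    (setLIntegral_mono' hs fun x hx => ENNReal.ofReal_le_ofReal (hgf x hx))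

namespace Real

theorem mul_rpow_neg_three_halves {u : ℝ} (hu : 0 ≤ u) :
    u * u ^ (-(3 : ℝ) / 2) = u ^ (-(1 : ℝ) / 2) := by
  rw [← rpow_one_add' hu (by norm_num)]
  norm_num

theorem rpow_neg_half {u : ℝ} (hu : 0 ≤ u) : u ^ (-(1 : ℝ) / 2) = (√u)⁻¹ := by
  rw [neg_div, rpow_neg hu, sqrt_eq_rpow]

theorem integral_mul_rpow_neg_three_halves {h : ℝ} (hh : 0 ≤ h) :
    ∫ u in (0 : ℝ)..h, u * u ^ (-(3 : ℝ) / 2) = 2 * √h := by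
  have hcongr : EqOn (fun u : ℝ => u * u ^ (-(3 : ℝ) / 2)) (fun u => u ^ (-(1 : ℝ) / 2))
      (uIcc 0 h) := fun u hu => mul_rpow_neg_three_halves (uIcc_of_le hh ▸ hu).1
  rw [intervalIntegral.integral_congr hcongr, integral_rpow (Or.inl (by norm_num)), sqrt_eq_rpow]
  norm_num
  ring

theorem integral_sub_mul_rpow_neg_three_halves {h : ℝ} (hh : 0 < h) :
    ∫ u in h..2 * h, (u - h) * u ^ (-(3 : ℝ) / 2) = (3 * √2 - 4) * √h := by
  have hpos : (0 : ℝ) ∉ uIcc h (2 * h) := by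
    rw [uIcc_of_le (by linarith)]; exact fun h0 => by linarith [h0.1]
  have hcongr : EqOn (fun u : ℝ => (u - h) * u ^ (-(3 : ℝ) / 2))
      (fun u => u ^ (-(1 : ℝ) / 2) - h * u ^ (-(3 : ℝ) / 2)) (uIcc h (2 * h)) := by
    intro u hu
    have hu0 : 0 ≤ u := by rw [uIcc_of_le (by linarith)] at hu; linarith [hu.1]
    simp only [sub_mul, mul_rpow_neg_three_halves hu0]
  have hint (r : ℝ) : IntervalIntegrable (fun u : ℝ => u ^ r) volume h (2 * h) :=
    intervalIntegral.intervalIntegrable_rpow (Or.inr hpos)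
  rw [intervalIntegral.integral_congr hcongr,
    intervalIntegral.integral_sub (hint _) ((hint _).const_mul h),
    intervalIntegral.integral_const_mul, integral_rpow (Or.inl (by norm_num)),
    integral_rpow (Or.inr ⟨by norm_num, hpos⟩)]
  have h2 : (0 : ℝ) ≤ 2 * h := by positivity
  rw [show -(1 : ℝ) / 2 + 1 = 1 / 2 by norm_num, show -(3 : ℝ) / 2 + 1 = -1 / 2 by norm_num,
    ← sqrt_eq_rpow, ← sqrt_eq_rpow, rpow_neg_half hh.le, rpow_neg_half h2,
    sqrt_mul zero_le_two]
  field_simp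
  linear_combination (2 * √2 - √2 ^ 2) * sq_sqrt hh.le - h * sq_sqrt zero_le_two

end Real

section NearOne

variable {F' : ℝ → ℝ} {c h : ℝ}

theorem ofReal_le_setLIntegral_one_sub_sub_mul (hh : 0 < h)
    (hlow : ∀ x ∈ Ioc (1 - 2 * h) (1 - h), (1/2) * c * (1 - x) ^ (-(3 : ℝ)/2) ≤ F' x) :
    ENNReal.ofReal (c / 2 * ((3 * √2 - 4) * √h)) ≤
      ∫⁻ x in Ioc (1 - 2 * h) (1 - h), ENNReal.ofReal ((1 - h - x) * F' x) := by
  have hval : ∫ x in Ioc (1 - 2 * h) (1 - h), (1 - h - x) * ((1/2) * c * (1 - x) ^ (-(3 : ℝ)/2))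
      = c / 2 * ((3 * √2 - 4) * √h) := by
    rw [← intervalIntegral.integral_of_le (by linarith)]
    calc ∫ x in (1 - 2 * h)..(1 - h), (1 - h - x) * ((1/2) * c * (1 - x) ^ (-(3 : ℝ)/2))
        = c / 2 * ∫ x in (1 - 2 * h)..(1 - h), ((1 - x) - h) * (1 - x) ^ (-(3 : ℝ)/2) := by
          rw [← intervalIntegral.integral_const_mul]; congr 1; funext x; ring
      _ = c / 2 * ∫ u in h..2 * h, (u - h) * u ^ (-(3 : ℝ)/2) := by
          rw [intervalIntegral.integral_comp_sub_left (fun u => (u - h) * u ^ (-(3 : ℝ)/2)),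
            sub_sub_cancel, sub_sub_cancel]
      _ = c / 2 * ((3 * √2 - 4) * √h) := by
          rw [Real.integral_sub_mul_rpow_neg_three_halves hh]
  rw [← hval]
  exact ofReal_setIntegral_le_setLIntegral_of_le measurableSet_Ioc fun x hx =>
    mul_le_mul_of_nonneg_left (hlow x hx) (by linarith [hx.2])

theorem ofReal_le_setLIntegral_one_sub_mul (hh : 0 < h)
    (hlow : ∀ x ∈ Ioo (1 - h) 1, (1/2) * c * (1 - x) ^ (-(3 : ℝ)/2) ≤ F' x) :
    ENNReal.ofReal (c * √h) ≤ ∫⁻ x in Ioc (1 - h) 1, ENNReal.ofReal ((1 - x) * F' x) := by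
  have hval : ∫ x in Ioc (1 - h) 1, (1 - x) * ((1/2) * c * (1 - x) ^ (-(3 : ℝ)/2)) = c * √h := by
    rw [← intervalIntegral.integral_of_le (by linarith)]
    calc ∫ x in (1 - h)..1, (1 - x) * ((1/2) * c * (1 - x) ^ (-(3 : ℝ)/2))
        = c / 2 * ∫ x in (1 - h)..1, (1 - x) * (1 - x) ^ (-(3 : ℝ)/2) := by
          rw [← intervalIntegral.integral_const_mul]; congr 1; funext x; ring
      _ = c / 2 * ∫ u in (0 : ℝ)..h, u * u ^ (-(3 : ℝ)/2) := by
          rw [intervalIntegral.integral_comp_sub_left (fun u => u * u ^ (-(3 : ℝ)/2)),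
            sub_self, sub_sub_cancel]
      _ = c * √h := by
          rw [Real.integral_mul_rpow_neg_three_halves hh.le]; ring
  rw [← hval]
  refine ofReal_setIntegral_le_setLIntegral_of_le measurableSet_Ioc fun x hx => ?_
  rcases hx.2.eq_or_lt with rfl | hx1
  · simp
  · exact mul_le_mul_of_nonneg_left (hlow x ⟨hx.1, hx1⟩) (by linarith)

end NearOne

theorem sigma_three_lower_estimate_general
    (F' : ℝ → ℝ) (c δ : ℝ) (hδ : δ ∈ Set.Ioo (0 : ℝ) 1)
    (hlow : ∀ x ∈ Set.Ico (1 - δ) (1 : ℝ), (1/2) * c * (1 - x) ^ (-(3 : ℝ)/2) ≤ F' x)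
    (n : ℕ) (hn : 2/δ ≤ (n : ℝ)) :
    ENNReal.ofReal ((3 * Real.sqrt 2 - 2) / 2 * c / Real.sqrt n) ≤
      (∫⁻ x in Set.Ioc (1 - 2/(n : ℝ)) (1 - 1/(n : ℝ)),
        ENNReal.ofReal ((1 - 1/(n : ℝ) - x) * F' x)) +
      ∫⁻ x in Set.Ioc (1 - 1/(n : ℝ)) (1 : ℝ), ENNReal.ofReal ((1 - x) * F' x) := by
  have hn0 : (0 : ℝ) < n := (div_pos two_pos hδ.1).trans_le hn
  have hδn : 2 * (1 / (n : ℝ)) ≤ δ := by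
    rw [mul_one_div, div_le_iff₀ hn0]; rwa [div_le_iff₀ hδ.1, mul_comm] at hn
  set h : ℝ := 1 / n with h_def
  have hh : 0 < h := by positivity
  rw [show 2 / (n : ℝ) = 2 * h by ring]
  calc ENNReal.ofReal ((3 * √2 - 2) / 2 * c / √n)
      = ENNReal.ofReal (c / 2 * ((3 * √2 - 4) * √h) + c * √h) := by
        rw [h_def, Real.sqrt_div' 1 hn0.le, Real.sqrt_one]; ring_nf
    _ ≤ ENNReal.ofReal (c / 2 * ((3 * √2 - 4) * √h)) + ENNReal.ofReal (c * √h) :=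
        ENNReal.ofReal_add_le
    _ ≤ _ := add_le_add
        (ofReal_le_setLIntegral_one_sub_sub_mul hh fun x hx =>
          hlow x ⟨by linarith [hx.1], by linarith [hx.2]⟩)
        (ofReal_le_setLIntegral_one_sub_mul hh fun x hx =>
          hlow x ⟨by linarith [hx.1], hx.2⟩)

/-- Estimate of Σ_{3,n} (last two terms) in the proof of Proposition 2: if F is differentiable
on [-1,1) with derivative F′ satisfying F′(x) ≥ (1/2)c(1−x)^{-3/2} on [1−δ, 1) for some c > 0
and δ ∈ (0,1), then for every n ≥ 2/δ,
∫_{1−2/n}^{1−1/n} (1−1/n−x) F′(x) dx + ∫_{1−1/n}^{1} (1−x) F′(x) dx ≥ ((3√2−2)/2)·c/√n.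
The (possibly infinite) improper integrals are formalized as lower Lebesgue integrals of the
nonnegative integrands. -/
theorem sigma_three_lower_estimate
    (F F' : ℝ → ℝ) (c δ : ℝ) (hc : 0 < c) (hδ : δ ∈ Set.Ioo (0 : ℝ) 1)
    (hderiv : ∀ x ∈ Set.Ico (-1 : ℝ) 1, HasDerivWithinAt F (F' x) (Set.Ico (-1 : ℝ) 1) x)
    (hlow : ∀ x ∈ Set.Ico (1 - δ) (1 : ℝ), (1/2) * c * (1 - x) ^ (-(3 : ℝ)/2) ≤ F' x)
    (n : ℕ) (hn : 2/δ ≤ (n : ℝ)) :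
    ENNReal.ofReal ((3 * Real.sqrt 2 - 2) / 2 * c / Real.sqrt n) ≤
      (∫⁻ x in Set.Ioc (1 - 2/(n : ℝ)) (1 - 1/(n : ℝ)),
        ENNReal.ofReal ((1 - 1/(n : ℝ) - x) * F' x)) +
      ∫⁻ x in Set.Ioc (1 - 1/(n : ℝ)) (1 : ℝ), ENNReal.ofReal ((1 - x) * F' x) :=
  sigma_three_lower_estimate_general F' c δ hδ hlow n hn
end

section
/- Let F₂ : [-1, 1) → ℝ be differentiable with derivative F₂′ integrable on [-1, β] for every β < 1, let δ ∈ (0, 1) and C > 0 be such that ∫_{-1}^{β} |F₂′(x)| dx ≤ F₂(β) + C for all β ∈ [1−δ, 1). Then for every integer n ≥ 2/δ, setting k₀ := ⌊(1−δ)n⌋, the quantity Σ_{2,n} := Σ_{k = -n}^{k₀ - 1} ∫_{k/n}^{(k+1)/n} ((k+1)/n − x) F₂′(x) dx + ∫_{k₀/n}^{1−δ} ((k₀+1)/n − x) F₂′(x) dx satisfies Σ_{2,n} ≥ −(1/n)(F₂(1−δ) + C). -/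
/-! On the cell `[k/n, (k+1)/n]` the weight `(k+1)/n - x` lies in `[0, 1/n]`, so each cell integral
of `((k+1)/n - x) F₂'(x)` is at least `-(1/n) ∫ |F₂'|` over the cell; the same holds for the last,
truncated cell `[k₀/n, 1-δ]`. The cells tile `[-1, 1-δ]`, so `Σ_{2,n} ≥ -(1/n) ∫_{-1}^{1-δ} |F₂'|`,
and the hypothesis at `β = 1-δ` bounds that integral by `F₂(1-δ) + C`. -/

open MeasureTheory Set intervalIntegral

theorem sum_integral_adjacent_intervals_Ico_int {E : Type*} [NormedAddCommGroup E]
    [NormedSpace ℝ E] {μ : Measure ℝ} {f : ℝ → E} {a : ℤ → ℝ} {m K : ℤ} (hmK : m ≤ K)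
    (hint : ∀ k ∈ Finset.Ico m K, IntervalIntegrable f μ (a k) (a (k + 1))) :
    ∑ k ∈ Finset.Ico m K, ∫ x in a k..a (k + 1), f x ∂μ = ∫ x in a m..a K, f x ∂μ := by
  obtain ⟨N, rfl⟩ : ∃ N : ℕ, K = m + N := ⟨(K - m).toNat, by omega⟩
  rw [Int.Ico_eq_finset_map, Finset.sum_map, add_sub_cancel_left, Int.toNat_natCast]
  have hshift := sum_integral_adjacent_intervals (μ := μ) (f := f) (a := fun i : ℕ => a (m + i))
    (n := N) fun i hi => by
      simpa [add_assoc] using hint (m + i) (Finset.mem_Ico.2 ⟨by omega, by omega⟩)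
  simpa [add_assoc] using hshift

theorem neg_mul_integral_abs_le_integral_sub_mul {f : ℝ → ℝ} {a b c h : ℝ}
    (hab : a ≤ b) (hbc : b ≤ c) (hca : c ≤ a + h) (hf : IntervalIntegrable f volume a b) :
    -(h * ∫ x in a..b, |f x|) ≤ ∫ x in a..b, (c - x) * f x := by
  rw [← intervalIntegral.integral_const_mul, ← intervalIntegral.integral_neg]
  refine integral_mono_on hab (hf.abs.const_mul h).neg (hf.continuousOn_mul (by fun_prop))
    fun x hx => ?_
  have hweight : |(c - x) * f x| ≤ h * |f x| := by
    rw [abs_mul, abs_of_nonneg (by linarith [hx.2])]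
    exact mul_le_mul_of_nonneg_right (by linarith [hx.1]) (abs_nonneg _)
  linarith [neg_abs_le ((c - x) * f x)]

theorem neg_mul_integral_abs_le_sum_integral_sub_mul {f : ℝ → ℝ} {n b : ℝ} {m K : ℤ}
    (hn : 0 < n) (hmK : m ≤ K) (hKb : K / n ≤ b) (hbK : b ≤ (K + 1) / n)
    (hf : IntervalIntegrable f volume (m / n) b) :
    -(1 / n * ∫ x in m / n..b, |f x|) ≤
      (∑ k ∈ Finset.Ico m K, ∫ x in (k : ℝ) / n..((k : ℝ) + 1) / n, (((k : ℝ) + 1) / n - x) * f x)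
        + ∫ x in (K : ℝ) / n..b, (((K : ℝ) + 1) / n - x) * f x := by
  have hmK' : (m : ℝ) / n ≤ K / n := by gcongr
  have hsub : ∀ x y, m / n ≤ x → x ≤ y → y ≤ b → IntervalIntegrable f volume x y :=
    fun x y hx hxy hy => hf.mono_set <| by
      rw [uIcc_of_le hxy, uIcc_of_le (hx.trans (hxy.trans hy))]; exact Icc_subset_Icc hx hy
  have hcell : ∀ k ∈ Finset.Ico m K, (m : ℝ) / n ≤ k / n ∧ (k : ℝ) / n ≤ (k + 1) / n ∧
      ((k : ℝ) + 1) / n ≤ b := by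
    intro k hk
    obtain ⟨hmk, hkK⟩ := Finset.mem_Ico.1 hk
    have hkK' : (k : ℝ) + 1 ≤ K := by exact_mod_cast hkK
    refine ⟨by gcongr, by gcongr; linarith, le_trans ?_ hKb⟩
    gcongr
  have hsum : ∑ k ∈ Finset.Ico m K, ∫ x in (k : ℝ) / n..((k : ℝ) + 1) / n, |f x| =
      ∫ x in m / n..K / n, |f x| := by
    have htelescope := sum_integral_adjacent_intervals_Ico_int (μ := volume) (f := fun x => |f x|)
      (a := fun k : ℤ => (k : ℝ) / n) hmK fun k hk => by
        obtain ⟨h₁, h₂, h₃⟩ := hcell k hk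
        simpa using (hsub _ _ h₁ h₂ h₃).abs
    simpa using htelescope
  have hcells := Finset.sum_le_sum fun k hk => by
    obtain ⟨h₁, h₂, h₃⟩ := hcell k hk
    exact neg_mul_integral_abs_le_integral_sub_mul h₂ le_rfl (by rw [add_div]) (hsub _ _ h₁ h₂ h₃)
  have hlast := neg_mul_integral_abs_le_integral_sub_mul hKb hbK (by rw [add_div])
    (hsub _ _ hmK' hKb le_rfl)
  calc -(1 / n * ∫ x in m / n..b, |f x|)
      = (∑ k ∈ Finset.Ico m K, -(1 / n * ∫ x in (k : ℝ) / n..((k : ℝ) + 1) / n, |f x|))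
          + -(1 / n * ∫ x in (K : ℝ) / n..b, |f x|) := by
        rw [Finset.sum_neg_distrib, ← Finset.mul_sum, hsum, ← integral_add_adjacent_intervals
          (hsub _ _ le_rfl hmK' hKb).abs (hsub _ _ hmK' hKb le_rfl).abs]
        ring
    _ ≤ _ := add_le_add hcells hlast

theorem sigma_two_lower_estimate_general
    (F₂ F₂' : ℝ → ℝ) (δ C : ℝ) (hδ : δ ∈ Set.Ioo (0 : ℝ) 1)
    (hint : ∀ β : ℝ, β < 1 → IntervalIntegrable F₂' MeasureTheory.volume (-1) β)
    (hBV : ∀ β ∈ Set.Ico (1 - δ) (1 : ℝ), (∫ x in (-1 : ℝ)..β, |F₂' x|) ≤ F₂ β + C)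
    (n : ℕ) (hn : 2/δ ≤ (n : ℝ)) :
    -(1/(n : ℝ)) * (F₂ (1 - δ) + C) ≤
      (∑ k ∈ Finset.Icc (-(n : ℤ)) (⌊(1 - δ) * (n : ℝ)⌋ - 1),
        ∫ x in ((k : ℝ)/(n : ℝ))..(((k : ℝ) + 1)/(n : ℝ)),
          (((k : ℝ) + 1)/(n : ℝ) - x) * F₂' x) +
      ∫ x in ((⌊(1 - δ) * (n : ℝ)⌋ : ℝ)/(n : ℝ))..(1 - δ),
        (((⌊(1 - δ) * (n : ℝ)⌋ : ℝ) + 1)/(n : ℝ) - x) * F₂' x := by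
  obtain ⟨hδ0, hδ1⟩ := hδ
  have hn0 : (0 : ℝ) < n := lt_of_lt_of_le (by positivity) hn
  set K : ℤ := ⌊(1 - δ) * (n : ℝ)⌋
  have hK0 : 0 ≤ K := Int.floor_nonneg.2 (by nlinarith)
  have hKb : (K : ℝ) / n ≤ 1 - δ := (div_le_iff₀ hn0).2 (Int.floor_le _)
  have hbK : 1 - δ ≤ ((K : ℝ) + 1) / n := (le_div_iff₀ hn0).2 (Int.lt_floor_add_one _).le
  have hleft : (((-(n : ℤ) : ℤ) : ℝ)) / n = -1 := by push_cast; field_simp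
  have hmesh := neg_mul_integral_abs_le_sum_integral_sub_mul (f := F₂') hn0 (by omega) hKb hbK
    (hleft ▸ hint (1 - δ) (by linarith))
  rw [hleft] at hmesh
  rw [Finset.Icc_sub_one_right_eq_Ico]
  refine le_trans ?_ hmesh
  rw [neg_mul, neg_le_neg_iff]
  exact mul_le_mul_of_nonneg_left (hBV (1 - δ) ⟨le_rfl, by linarith⟩) (by positivity)

/-- Estimate (eqSigma2IA) of Σ_{2,n} in the proof of Proposition 2: if F₂ is differentiable
on [-1,1) with derivative F₂′ integrable on [-1, β] for every β < 1, and δ ∈ (0,1), C > 0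
are such that ∫_{-1}^β |F₂′| ≤ F₂(β) + C for all β ∈ [1−δ, 1), then for every n ≥ 2/δ,
with k₀ = ⌊(1−δ)n⌋,
Σ_{k=-n}^{k₀-1} ∫_{k/n}^{(k+1)/n} ((k+1)/n − x) F₂′(x) dx
  + ∫_{k₀/n}^{1−δ} ((k₀+1)/n − x) F₂′(x) dx ≥ −(1/n)(F₂(1−δ) + C). -/
theorem sigma_two_lower_estimate
    (F₂ F₂' : ℝ → ℝ) (δ C : ℝ) (hδ : δ ∈ Set.Ioo (0 : ℝ) 1) (hC : 0 < C)
    (hderiv : ∀ x ∈ Set.Ico (-1 : ℝ) 1, HasDerivWithinAt F₂ (F₂' x) (Set.Ico (-1 : ℝ) 1) x)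
    (hint : ∀ β : ℝ, β < 1 → IntervalIntegrable F₂' MeasureTheory.volume (-1) β)
    (hBV : ∀ β ∈ Set.Ico (1 - δ) (1 : ℝ), (∫ x in (-1 : ℝ)..β, |F₂' x|) ≤ F₂ β + C)
    (n : ℕ) (hn : 2/δ ≤ (n : ℝ)) :
    -(1/(n : ℝ)) * (F₂ (1 - δ) + C) ≤
      (∑ k ∈ Finset.Icc (-(n : ℤ)) (⌊(1 - δ) * (n : ℝ)⌋ - 1),
        ∫ x in ((k : ℝ)/(n : ℝ))..(((k : ℝ) + 1)/(n : ℝ)),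
          (((k : ℝ) + 1)/(n : ℝ) - x) * F₂' x) +
      ∫ x in ((⌊(1 - δ) * (n : ℝ)⌋ : ℝ)/(n : ℝ))..(1 - δ),
        (((⌊(1 - δ) * (n : ℝ)⌋ : ℝ) + 1)/(n : ℝ) - x) * F₂' x :=
  sigma_two_lower_estimate_general F₂ F₂' δ C hδ hint hBV n hn
end
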